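/- Let 𝓜 be a finite nonempty set of unit vectors in ℝⁿ and Z ~ N(0, Iₙ). Define H(t) = P(max_{a ∈ 𝓜} |aᵀZ| ≤ t). Then H is strictly increasing on [0, ∞): for any 0 < t₁ < t₂, H(t₁) < H(t₂). -/
import Mathlib


open MeasureTheory ProbabilityTheory

/-- The distribution function of the maximum statistic is strictly increasing on
`(0, ∞)`. -/
theorem stmt_13 {n : ℕ} (hn : 1 ≤ n) {ι : Type*} (M : Finset ι) (hM : M.Nonempty)
    (a : ι → Fin n → ℝ) (ha : ∀ m ∈ M, ∑ i, a m i ^ 2 = 1)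
    (μ : Measure (Fin n → ℝ)) (hμ : μ = Measure.pi fun _ => gaussianReal 0 1)
    (H : ℝ → ℝ)
    (hH : ∀ t, H t = (μ {z | ∀ m ∈ M, |∑ i, a m i * z i| ≤ t}).toReal) :
    ∀ t₁ t₂ : ℝ, 0 < t₁ → t₁ < t₂ → H t₁ < H t₂ := by
  intro t₁ t₂ ht₁ ht
  -- openPos instance
  have hOP : (gaussianReal 0 1).IsOpenPosMeasure :=
    (gaussianReal_absolutelyContinuous' 0 one_ne_zero).isOpenPosMeasure
  have hμOP : μ.IsOpenPosMeasure := by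
    haveI := hOP
    rw [hμ]
    infer_instance
  have hμProb : IsProbabilityMeasure μ := by
    rw [hμ]; infer_instance
  obtain ⟨m₀, hm₀⟩ := hM
  set c : ℝ := (t₁ + t₂) / 2 with hc
  have hct₁ : t₁ < c := by simp [hc]; linarith
  have hct₂ : c < t₂ := by simp [hc]; linarith
  have hc0 : 0 < c := ht₁.trans hct₁
  -- continuity of linear forms
  have hcont : ∀ m : ι, Continuous fun z : Fin n → ℝ => ∑ i, a m i * z i := by
    intro m
    exact continuous_finset_sum _ fun i _ => (continuous_const.mul (continuous_apply i))
  set U : Set (Fin n → ℝ) :=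
    {z | (∀ m ∈ M, |∑ i, a m i * z i| < t₂) ∧ t₁ < |∑ i, a m₀ i * z i|} with hU
  have hUopen : IsOpen U := by
    have h1 : IsOpen {z : Fin n → ℝ | ∀ m ∈ M, |∑ i, a m i * z i| < t₂} := by
      have : {z : Fin n → ℝ | ∀ m ∈ M, |∑ i, a m i * z i| < t₂} =
          ⋂ m ∈ M, {z : Fin n → ℝ | |∑ i, a m i * z i| < t₂} := by
        ext z; simp
      rw [this]
      exact isOpen_biInter_finset fun m _ =>
        isOpen_lt (continuous_abs.comp (hcont m)) continuous_const
    have h2 : IsOpen {z : Fin n → ℝ | t₁ < |∑ i, a m₀ i * z i|} :=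
      isOpen_lt continuous_const (continuous_abs.comp (hcont m₀))
    exact h1.inter h2
  have hUne : U.Nonempty := by
    refine ⟨fun i => c * a m₀ i, ?_, ?_⟩
    · intro m hm
      have hCS : (∑ i, a m i * a m₀ i) ^ 2 ≤ (∑ i, a m i ^ 2) * ∑ i, a m₀ i ^ 2 :=
        Finset.sum_mul_sq_le_sq_mul_sq _ _ _
      rw [ha m hm, ha m₀ hm₀, one_mul] at hCS
      have habs : |∑ i, a m i * a m₀ i| ≤ 1 := (sq_le_one_iff_abs_le_one _).mp hCS
      have : ∑ i, a m i * (c * a m₀ i) = c * ∑ i, a m i * a m₀ i := by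
        rw [Finset.mul_sum]; congr 1; ext i; ring
      rw [this, abs_mul, abs_of_pos hc0]
      calc c * |∑ i, a m i * a m₀ i| ≤ c * 1 := by nlinarith
        _ < t₂ := by linarith
    · have : ∑ i, a m₀ i * (c * a m₀ i) = c * ∑ i, a m₀ i ^ 2 := by
        rw [Finset.mul_sum]; congr 1; ext i; ring
      rw [this, ha m₀ hm₀, mul_one, abs_of_pos hc0]
      exact hct₁
  have hUpos : 0 < μ U := hUopen.measure_pos μ hUne
  set A₁ := {z : Fin n → ℝ | ∀ m ∈ M, |∑ i, a m i * z i| ≤ t₁} with hA₁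
  set A₂ := {z : Fin n → ℝ | ∀ m ∈ M, |∑ i, a m i * z i| ≤ t₂} with hA₂
  have hdisj : Disjoint A₁ U := by
    rw [Set.disjoint_left]
    intro z hz hzU
    exact absurd (hz m₀ hm₀) (not_le.mpr hzU.2)
  have hsub : A₁ ∪ U ⊆ A₂ := by
    rintro z (hz | hz)
    · intro m hm; exact (hz m hm).trans ht.le
    · intro m hm; exact (hz.1 m hm).le
  have hmeas : μ A₁ + μ U ≤ μ A₂ := by
    rw [← measure_union hdisj hUopen.measurableSet]
    exact measure_mono hsub
  have h2lt : μ A₁ < μ A₂ := lt_of_lt_of_le (ENNReal.lt_add_right (measure_ne_top μ _) hUpos.ne') hmeas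
  rw [hH, hH]
  exact ENNReal.toReal_strict_mono (measure_ne_top μ _) h2lt
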